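/- Data-value transfer in complete graphs (statement 4 of the key lemma): let K be a data-graph in which L(v,w) = E for a fixed set E ⊆ Σ_e and all pairs of nodes v, w. Let φ be a positive Reg-GXPath node expression, and let Σ_n^φ be the set of data values mentioned in φ (those c appearing in subexpressions c⁼ or c≠). If some node v with D(v) ∉ Σ_n^φ satisfies v ∈ ⟦φ⟧_K, then every node z with D(z) ∉ Σ_n^φ satisfies z ∈ ⟦φ⟧_K. -/
import Mathlib


/-- A data-graph: a set of nodes, an edge labeling, and a data-value assignment. -/
structure DataGraph (V E Dv : Type) where
  nodes : Set V
  edges : V → V → Set E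
  data : V → Dv

mutual
/-- Reg-GXPath path expressions. -/
inductive PExp (E Dv : Type) where
  | eps : PExp E Dv
  | wild : PExp E Dv
  | lab : E → PExp E Dv
  | inv : E → PExp E Dv
  | test : NExp E Dv → PExp E Dv
  | comp : PExp E Dv → PExp E Dv → PExp E Dv
  | union : PExp E Dv → PExp E Dv → PExp E Dv
  | inter : PExp E Dv → PExp E Dv → PExp E Dv
  | star : PExp E Dv → PExp E Dv
  | compl : PExp E Dv → PExp E Dv
  | iter : PExp E Dv → ℕ → ℕ → PExp E Dv
/-- Reg-GXPath node expressions. -/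
inductive NExp (E Dv : Type) where
  | neg : NExp E Dv → NExp E Dv
  | and : NExp E Dv → NExp E Dv → NExp E Dv
  | or : NExp E Dv → NExp E Dv → NExp E Dv
  | diam : PExp E Dv → NExp E Dv
  | eqc : Dv → NExp E Dv
  | neqc : Dv → NExp E Dv
  | cmpEq : PExp E Dv → PExp E Dv → NExp E Dv
  | cmpNeq : PExp E Dv → PExp E Dv → NExp E Dv
end

variable {V E Dv : Type}

/-- Relational composition of binary relations presented as sets of pairs. -/
def dgComp (R S : Set (V × V)) : Set (V × V) := {p | ∃ y, (p.1, y) ∈ R ∧ (y, p.2) ∈ S}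

/-- The identity relation on the nodes of a data-graph. -/
def DataGraph.idRel (G : DataGraph V E Dv) : Set (V × V) := {p | p.1 = p.2 ∧ p.1 ∈ G.nodes}

/-- Iterated relational composition, with `I` as the 0-th power (identity). -/
def dgPow (I R : Set (V × V)) : ℕ → Set (V × V)
  | 0 => I
  | k + 1 => dgComp (dgPow I R k) R

mutual
/-- Semantics of path expressions on a data-graph: a set of pairs of nodes. -/
def psem (G : DataGraph V E Dv) : PExp E Dv → Set (V × V)
  | .eps => G.idRel
  | .wild => {p | p.1 ∈ G.nodes ∧ p.2 ∈ G.nodes ∧ (G.edges p.1 p.2).Nonempty}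
  | .lab a => {p | p.1 ∈ G.nodes ∧ p.2 ∈ G.nodes ∧ a ∈ G.edges p.1 p.2}
  | .inv a => {p | p.1 ∈ G.nodes ∧ p.2 ∈ G.nodes ∧ a ∈ G.edges p.2 p.1}
  | .test φ => {p | p.1 = p.2 ∧ p.1 ∈ nsem G φ}
  | .comp α β => dgComp (psem G α) (psem G β)
  | .union α β => psem G α ∪ psem G β
  | .inter α β => psem G α ∩ psem G β
  | .star α => G.idRel ∪ {p | Relation.TransGen (fun x y => (x, y) ∈ psem G α) p.1 p.2}
  | .compl α => {p | p.1 ∈ G.nodes ∧ p.2 ∈ G.nodes ∧ p ∉ psem G α}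
  | .iter α n m => {p | ∃ k, n ≤ k ∧ k ≤ m ∧ p ∈ dgPow G.idRel (psem G α) k}
/-- Semantics of node expressions on a data-graph: a set of nodes. -/
def nsem (G : DataGraph V E Dv) : NExp E Dv → Set V
  | .neg φ => {v | v ∈ G.nodes ∧ v ∉ nsem G φ}
  | .and φ ψ => nsem G φ ∩ nsem G ψ
  | .or φ ψ => nsem G φ ∪ nsem G ψ
  | .diam α => {v | ∃ w, (v, w) ∈ psem G α}
  | .eqc c => {v | v ∈ G.nodes ∧ G.data v = c}
  | .neqc c => {v | v ∈ G.nodes ∧ G.data v ≠ c}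
  | .cmpEq α β => {v | ∃ v' v'', (v, v') ∈ psem G α ∧ (v, v'') ∈ psem G β ∧ G.data v' = G.data v''}
  | .cmpNeq α β => {v | ∃ v' v'', (v, v') ∈ psem G α ∧ (v, v'') ∈ psem G β ∧ G.data v' ≠ G.data v''}
end

mutual
/-- Positive (complement/negation-free) path expressions. -/
def PExp.Positive : PExp E Dv → Prop
  | .eps => True
  | .wild => True
  | .lab _ => True
  | .inv _ => True
  | .test φ => φ.Positive
  | .comp α β => α.Positive ∧ β.Positive
  | .union α β => α.Positive ∧ β.Positive
  | .inter α β => α.Positive ∧ β.Positive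
  | .star α => α.Positive
  | .compl _ => False
  | .iter α _ _ => α.Positive
/-- Positive (negation-free) node expressions. -/
def NExp.Positive : NExp E Dv → Prop
  | .neg _ => False
  | .and φ ψ => φ.Positive ∧ ψ.Positive
  | .or φ ψ => φ.Positive ∧ ψ.Positive
  | .diam α => α.Positive
  | .eqc _ => True
  | .neqc _ => True
  | .cmpEq α β => α.Positive ∧ β.Positive
  | .cmpNeq α β => α.Positive ∧ β.Positive
end

/-- `G.Subgraph G'` : `G` is a sub-data-graph of `G'`. -/
def DataGraph.Subgraph (G G' : DataGraph V E Dv) : Prop :=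
  G.nodes ⊆ G'.nodes ∧ (∀ v ∈ G.nodes, ∀ w ∈ G.nodes, G.edges v w ⊆ G'.edges v w) ∧
    ∀ v ∈ G.nodes, G.data v = G'.data v

/-- Consistency of a data-graph w.r.t. sets of path and node constraints. -/
def DataGraph.Consistent (G : DataGraph V E Dv)
    (Rp : Set (PExp E Dv)) (Rn : Set (NExp E Dv)) : Prop :=
  (∀ α ∈ Rp, ∀ v ∈ G.nodes, ∀ w ∈ G.nodes, (v, w) ∈ psem G α) ∧
    (∀ φ ∈ Rn, ∀ v ∈ G.nodes, v ∈ nsem G φ)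

/-- `H` is a subset repair of `G` w.r.t. constraints `Rp ∪ Rn`. -/
def IsSubsetRepair (H G : DataGraph V E Dv)
    (Rp : Set (PExp E Dv)) (Rn : Set (NExp E Dv)) : Prop :=
  H.Consistent Rp Rn ∧ H.Subgraph G ∧
    ∀ K : DataGraph V E Dv, K.Consistent Rp Rn → K.Subgraph G → H.Subgraph K → K.Subgraph H

/-- `H` is a superset repair of `G` w.r.t. constraints `Rp ∪ Rn`. -/
def IsSupersetRepair (H G : DataGraph V E Dv)
    (Rp : Set (PExp E Dv)) (Rn : Set (NExp E Dv)) : Prop :=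
  H.Consistent Rp Rn ∧ G.Subgraph H ∧
    ∀ K : DataGraph V E Dv, K.Consistent Rp Rn → G.Subgraph K → K.Subgraph H → H.Subgraph K
mutual
/-- Data values mentioned in a path expression. -/
def PExp.vals {E Dv : Type} : PExp E Dv → Set Dv
  | .eps => ∅
  | .wild => ∅
  | .lab _ => ∅
  | .inv _ => ∅
  | .test φ => φ.vals
  | .comp α β => α.vals ∪ β.vals
  | .union α β => α.vals ∪ β.vals
  | .inter α β => α.vals ∪ β.vals
  | .star α => α.vals
  | .compl α => α.vals
  | .iter α _ _ => α.vals
/-- Data values mentioned in a node expression. -/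
def NExp.vals {E Dv : Type} : NExp E Dv → Set Dv
  | .neg φ => φ.vals
  | .and φ ψ => φ.vals ∪ ψ.vals
  | .or φ ψ => φ.vals ∪ ψ.vals
  | .diam α => α.vals
  | .eqc c => {c}
  | .neqc c => {c}
  | .cmpEq α β => α.vals ∪ β.vals
  | .cmpNeq α β => α.vals ∪ β.vals
end

section Aux
variable {V E Dv : Type}

private theorem tg_last {r : V → V → Prop} {v w : V} (h : Relation.TransGen r v w) :
    v = w ∨ ∃ b, b ≠ w ∧ r b w ∧ (b = v ∨ Relation.TransGen r v b) := by
  induction h with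
  | single h =>
    rename_i w'
    by_cases hvw : v = w'
    · exact Or.inl hvw
    · exact Or.inr ⟨v, hvw, h, Or.inl rfl⟩
  | tail h1 h2 ih =>
    rename_i b w'
    by_cases hb : b = w'
    · subst hb; exact ih
    · exact Or.inr ⟨b, hb, h2, Or.inr h1⟩

private theorem tg_first {r : V → V → Prop} {v w : V} (h : Relation.TransGen r v w) :
    v = w ∨ ∃ a, a ≠ v ∧ r v a ∧ (a = w ∨ Relation.TransGen r a w) := by
  induction h with
  | single h =>
    rename_i w'
    by_cases hvw : v = w'
    · exact Or.inl hvw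
    · exact Or.inr ⟨w', fun hh => hvw hh.symm, h, Or.inl rfl⟩
  | tail h1 h2 ih =>
    rename_i b w'
    rcases ih with rfl | ⟨a, hav, hva, hrest⟩
    · by_cases hvw : v = w'
      · exact Or.inl hvw
      · exact Or.inr ⟨w', fun hh => hvw hh.symm, h2, Or.inl rfl⟩
    · refine Or.inr ⟨a, hav, hva, Or.inr ?_⟩
      rcases hrest with rfl | htg
      · exact Relation.TransGen.single h2
      · exact htg.tail h2

mutual
private theorem memP (K : DataGraph V E Dv) (α : PExp E Dv) :
    ∀ v w : V, (v, w) ∈ psem K α → v ∈ K.nodes ∧ w ∈ K.nodes := by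
  cases α with
  | eps =>
    intro v w h
    obtain ⟨h1, h2⟩ := h
    have h1' : v = w := h1
    exact ⟨h2, h1' ▸ h2⟩
  | wild => intro v w h; exact ⟨h.1, h.2.1⟩
  | lab a => intro v w h; exact ⟨h.1, h.2.1⟩
  | inv a => intro v w h; exact ⟨h.1, h.2.1⟩
  | test φ =>
    intro v w h
    obtain ⟨heq, hm⟩ := h
    have heq' : v = w := heq
    have := memN K φ v hm
    exact ⟨this, heq' ▸ this⟩
  | comp α β =>
    intro v w h
    obtain ⟨y, h1, h2⟩ := h
    exact ⟨(memP K α v y h1).1, (memP K β y w h2).2⟩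
  | union α β =>
    intro v w h
    obtain h | h := h
    · exact memP K α v w h
    · exact memP K β v w h
  | inter α β => intro v w h; exact memP K α v w h.1
  | star α =>
    intro v w h
    obtain h | h := h
    · have h1' : v = w := h.1
      exact ⟨h.2, h1' ▸ h.2⟩
    · simp only [Set.mem_setOf_eq] at h
      induction h with
      | single h' => exact memP K α _ _ h'
      | tail h1 h2 ih => exact ⟨ih.1, (memP K α _ _ h2).2⟩
  | compl α => intro v w h; exact ⟨h.1, h.2.1⟩
  | iter α n m =>
    have key : ∀ (k : ℕ) (v w : V), (v, w) ∈ dgPow K.idRel (psem K α) k →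
        v ∈ K.nodes ∧ w ∈ K.nodes := by
      intro k
      induction k with
      | zero =>
        intro v w hp
        have h1' : v = w := hp.1
        exact ⟨hp.2, h1' ▸ hp.2⟩
      | succ k ih =>
        intro v w hp
        obtain ⟨y, h1, h2⟩ := hp
        exact ⟨(ih v y h1).1, (memP K α y w h2).2⟩
    intro v w h
    obtain ⟨k, _, _, hp⟩ := h
    exact key k v w hp

termination_by sizeOf α

private theorem memN (K : DataGraph V E Dv) (φ : NExp E Dv) :
    ∀ v : V, v ∈ nsem K φ → v ∈ K.nodes := by
  cases φ with
  | neg φ => intro v h; exact h.1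
  | and φ ψ => intro v h; exact memN K φ v h.1
  | or φ ψ =>
    intro v h
    obtain h | h := h
    · exact memN K φ v h
    · exact memN K ψ v h
  | diam α =>
    intro v h
    obtain ⟨w, hw⟩ := h
    exact (memP K α v w hw).1
  | eqc c => intro v h; exact h.1
  | neqc c => intro v h; exact h.1
  | cmpEq α β =>
    intro v h
    obtain ⟨a, b, h1, _, _⟩ := h
    exact (memP K α v a h1).1
  | cmpNeq α β =>
    intro v h
    obtain ⟨a, b, h1, _, _⟩ := h
    exact (memP K α v a h1).1
termination_by sizeOf φ
end

end Aux
section Key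
variable {V E Dv : Type}

mutual
/-- Key path lemma: five transfer statements for positive path expressions on complete graphs. -/
private theorem keyP (K : DataGraph V E Dv) (Eset : Set E)
    (hK : ∀ v ∈ K.nodes, ∀ w ∈ K.nodes, K.edges v w = Eset)
    (α : PExp E Dv) (hpos : α.Positive) :
    (∀ v w z, (v, w) ∈ psem K α → v ≠ w → K.data w ∉ α.vals → z ∈ K.nodes →
      K.data z ∉ α.vals → (v, z) ∈ psem K α) ∧
    (∀ v w z, (v, w) ∈ psem K α → v ≠ w → K.data v ∉ α.vals → z ∈ K.nodes →
      K.data z ∉ α.vals → (z, w) ∈ psem K α) ∧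
    (∀ v z, (v, v) ∈ psem K α → K.data v ∉ α.vals → z ∈ K.nodes →
      K.data z ∉ α.vals → (z, z) ∈ psem K α) ∧
    (∀ v w x, (v, w) ∈ psem K α → v ≠ w → K.data v ∉ α.vals → K.data w ∉ α.vals →
      x ∈ K.nodes → K.data x ∉ α.vals → (x, x) ∈ psem K α) ∧
    (∀ v w x y, (v, w) ∈ psem K α → v ≠ w → K.data v ∉ α.vals → K.data w ∉ α.vals →
      x ∈ K.nodes → K.data x ∉ α.vals → y ∈ K.nodes → K.data y ∉ α.vals → x ≠ y →
      (x, y) ∈ psem K α) := by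
  cases α with
  | eps =>
    simp only [psem, PExp.vals, DataGraph.idRel, Set.mem_setOf_eq]
    refine ⟨?_, ?_, ?_, ?_, ?_⟩
    · rintro v w z ⟨heq, -⟩ hne _ _ _; exact absurd heq hne
    · rintro v w z ⟨heq, -⟩ hne _ _ _; exact absurd heq hne
    · rintro v z - - hzn -; exact ⟨by trivial, hzn⟩
    · rintro v w x ⟨heq, -⟩ hne _ _ _ _; exact absurd heq hne
    · rintro v w x y ⟨heq, -⟩ hne _ _ _ _ _ _ _; exact absurd heq hne
  | wild =>
    simp only [psem, Set.mem_setOf_eq]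
    refine ⟨?_, ?_, ?_, ?_, ?_⟩
    · rintro v w z ⟨hv, hw, hne⟩ - - hzn -
      refine ⟨hv, hzn, ?_⟩
      rw [hK v hv z hzn]; rwa [hK v hv w hw] at hne
    · rintro v w z ⟨hv, hw, hne⟩ - - hzn -
      refine ⟨hzn, hw, ?_⟩
      rw [hK z hzn w hw]; rwa [hK v hv w hw] at hne
    · rintro v z ⟨hv, -, hne⟩ - hzn -
      refine ⟨hzn, hzn, ?_⟩
      rw [hK z hzn z hzn]; rwa [hK v hv v hv] at hne
    · rintro v w x ⟨hv, hw, hne⟩ - - - hxn -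
      refine ⟨hxn, hxn, ?_⟩
      rw [hK x hxn x hxn]; rwa [hK v hv w hw] at hne
    · rintro v w x y ⟨hv, hw, hne⟩ - - - hxn - hyn - -
      refine ⟨hxn, hyn, ?_⟩
      rw [hK x hxn y hyn]; rwa [hK v hv w hw] at hne
  | lab a =>
    simp only [psem, Set.mem_setOf_eq]
    refine ⟨?_, ?_, ?_, ?_, ?_⟩
    · rintro v w z ⟨hv, hw, ha⟩ - - hzn -
      refine ⟨hv, hzn, ?_⟩
      rw [hK v hv z hzn]; rwa [hK v hv w hw] at ha
    · rintro v w z ⟨hv, hw, ha⟩ - - hzn -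
      refine ⟨hzn, hw, ?_⟩
      rw [hK z hzn w hw]; rwa [hK v hv w hw] at ha
    · rintro v z ⟨hv, -, ha⟩ - hzn -
      refine ⟨hzn, hzn, ?_⟩
      rw [hK z hzn z hzn]; rwa [hK v hv v hv] at ha
    · rintro v w x ⟨hv, hw, ha⟩ - - - hxn -
      refine ⟨hxn, hxn, ?_⟩
      rw [hK x hxn x hxn]; rwa [hK v hv w hw] at ha
    · rintro v w x y ⟨hv, hw, ha⟩ - - - hxn - hyn - -
      refine ⟨hxn, hyn, ?_⟩
      rw [hK x hxn y hyn]; rwa [hK v hv w hw] at ha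
  | inv a =>
    simp only [psem, Set.mem_setOf_eq]
    refine ⟨?_, ?_, ?_, ?_, ?_⟩
    · rintro v w z ⟨hv, hw, ha⟩ - - hzn -
      refine ⟨hv, hzn, ?_⟩
      rw [hK z hzn v hv]; rwa [hK w hw v hv] at ha
    · rintro v w z ⟨hv, hw, ha⟩ - - hzn -
      refine ⟨hzn, hw, ?_⟩
      rw [hK w hw z hzn]; rwa [hK w hw v hv] at ha
    · rintro v z ⟨hv, -, ha⟩ - hzn -
      refine ⟨hzn, hzn, ?_⟩
      rw [hK z hzn z hzn]; rwa [hK v hv v hv] at ha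
    · rintro v w x ⟨hv, hw, ha⟩ - - - hxn -
      refine ⟨hxn, hxn, ?_⟩
      rw [hK x hxn x hxn]; rwa [hK w hw v hv] at ha
    · rintro v w x y ⟨hv, hw, ha⟩ - - - hxn - hyn - -
      refine ⟨hxn, hyn, ?_⟩
      rw [hK y hyn x hxn]; rwa [hK w hw v hv] at ha
  | test φ =>
    simp only [PExp.Positive] at hpos
    simp only [psem, PExp.vals, Set.mem_setOf_eq]
    refine ⟨?_, ?_, ?_, ?_, ?_⟩
    · rintro v w z ⟨heq, -⟩ hne _ _ _; exact absurd heq hne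
    · rintro v w z ⟨heq, -⟩ hne _ _ _; exact absurd heq hne
    · rintro v z ⟨-, hm⟩ hv hzn hz
      exact ⟨by trivial, keyN K Eset hK φ hpos v z hm (memN K φ v hm) hv hzn hz⟩
    · rintro v w x ⟨heq, -⟩ hne _ _ _ _; exact absurd heq hne
    · rintro v w x y ⟨heq, -⟩ hne _ _ _ _ _ _ _; exact absurd heq hne
  | comp α β =>
    simp only [PExp.Positive] at hpos
    obtain ⟨hA1, hA2, hA3, hA5, hA6⟩ := keyP K Eset hK α hpos.1
    obtain ⟨hB1, hB2, hB3, hB5, hB6⟩ := keyP K Eset hK β hpos.2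
    simp only [psem, PExp.vals, Set.mem_union, not_or, dgComp, Set.mem_setOf_eq]
    refine ⟨?_, ?_, ?_, ?_, ?_⟩
    · rintro v w z ⟨y, hvy, hyw⟩ hne ⟨hwa, hwb⟩ hzn ⟨hza, hzb⟩
      by_cases hy : y = w
      · subst hy
        exact ⟨z, hA1 v y z hvy hne hwa hzn hza, hB3 y z hyw hwb hzn hzb⟩
      · exact ⟨y, hvy, hB1 y w z hyw hy hwb hzn hzb⟩
    · rintro v w z ⟨y, hvy, hyw⟩ hne ⟨hva, hvb⟩ hzn ⟨hza, hzb⟩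
      by_cases hy : y = v
      · subst hy
        exact ⟨z, hA3 y z hvy hva hzn hza, hB2 y w z hyw hne hvb hzn hzb⟩
      · exact ⟨y, hA2 v y z hvy (fun hh => hy hh.symm) hva hzn hza, hyw⟩
    · rintro v z ⟨y, hvy, hyv⟩ ⟨hva, hvb⟩ hzn ⟨hza, hzb⟩
      by_cases hy : y = v
      · subst hy
        exact ⟨z, hA3 y z hvy hva hzn hza, hB3 y z hyv hvb hzn hzb⟩
      · exact ⟨y, hA2 v y z hvy (fun hh => hy hh.symm) hva hzn hza,
          hB1 y v z hyv hy hvb hzn hzb⟩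
    · rintro v w x ⟨y, hvy, hyw⟩ hne ⟨hva, hvb⟩ ⟨hwa, hwb⟩ hxn ⟨hxa, hxb⟩
      by_cases hyv : y = v
      · subst hyv
        exact ⟨x, hA3 y x hvy hva hxn hxa, hB5 y w x hyw hne hvb hwb hxn hxb⟩
      by_cases hcw : y = w
      · subst hcw
        exact ⟨x, hA5 v y x hvy hne hva hwa hxn hxa, hB3 y x hyw hwb hxn hxb⟩
      · exact ⟨y, hA2 v y x hvy (fun hh => hyv hh.symm) hva hxn hxa,
          hB1 y w x hyw hcw hwb hxn hxb⟩
    · rintro v w x y ⟨m, hvm, hmw⟩ hne ⟨hva, hvb⟩ ⟨hwa, hwb⟩ hxn ⟨hxa, hxb⟩ hyn ⟨hya, hyb⟩ hxy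
      by_cases hmv : m = v
      · subst hmv
        exact ⟨x, hA3 m x hvm hva hxn hxa, hB6 m w x y hmw hne hvb hwb hxn hxb hyn hyb hxy⟩
      by_cases hcw : m = w
      · subst hcw
        exact ⟨y, hA6 v m x y hvm hne hva hwa hxn hxa hyn hya hxy,
          hB3 m y hmw hwb hyn hyb⟩
      · exact ⟨m, hA2 v m x hvm (fun hh => hmv hh.symm) hva hxn hxa,
          hB1 m w y hmw hcw hwb hyn hyb⟩
  | union α β =>
    simp only [PExp.Positive] at hpos
    obtain ⟨hA1, hA2, hA3, hA5, hA6⟩ := keyP K Eset hK α hpos.1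
    obtain ⟨hB1, hB2, hB3, hB5, hB6⟩ := keyP K Eset hK β hpos.2
    simp only [psem, PExp.vals, Set.mem_union, not_or]
    refine ⟨?_, ?_, ?_, ?_, ?_⟩
    · rintro v w z (h | h) hne ⟨hwa, hwb⟩ hzn ⟨hza, hzb⟩
      · exact Or.inl (hA1 v w z h hne hwa hzn hza)
      · exact Or.inr (hB1 v w z h hne hwb hzn hzb)
    · rintro v w z (h | h) hne ⟨hva, hvb⟩ hzn ⟨hza, hzb⟩
      · exact Or.inl (hA2 v w z h hne hva hzn hza)
      · exact Or.inr (hB2 v w z h hne hvb hzn hzb)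
    · rintro v z (h | h) ⟨hva, hvb⟩ hzn ⟨hza, hzb⟩
      · exact Or.inl (hA3 v z h hva hzn hza)
      · exact Or.inr (hB3 v z h hvb hzn hzb)
    · rintro v w x (h | h) hne ⟨hva, hvb⟩ ⟨hwa, hwb⟩ hxn ⟨hxa, hxb⟩
      · exact Or.inl (hA5 v w x h hne hva hwa hxn hxa)
      · exact Or.inr (hB5 v w x h hne hvb hwb hxn hxb)
    · rintro v w x y (h | h) hne ⟨hva, hvb⟩ ⟨hwa, hwb⟩ hxn ⟨hxa, hxb⟩ hyn ⟨hya, hyb⟩ hxy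
      · exact Or.inl (hA6 v w x y h hne hva hwa hxn hxa hyn hya hxy)
      · exact Or.inr (hB6 v w x y h hne hvb hwb hxn hxb hyn hyb hxy)
  | inter α β =>
    simp only [PExp.Positive] at hpos
    obtain ⟨hA1, hA2, hA3, hA5, hA6⟩ := keyP K Eset hK α hpos.1
    obtain ⟨hB1, hB2, hB3, hB5, hB6⟩ := keyP K Eset hK β hpos.2
    simp only [psem, PExp.vals, Set.mem_union, not_or, Set.mem_inter_iff]
    refine ⟨?_, ?_, ?_, ?_, ?_⟩
    · rintro v w z ⟨h1, h2⟩ hne ⟨hwa, hwb⟩ hzn ⟨hza, hzb⟩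
      exact ⟨hA1 v w z h1 hne hwa hzn hza, hB1 v w z h2 hne hwb hzn hzb⟩
    · rintro v w z ⟨h1, h2⟩ hne ⟨hva, hvb⟩ hzn ⟨hza, hzb⟩
      exact ⟨hA2 v w z h1 hne hva hzn hza, hB2 v w z h2 hne hvb hzn hzb⟩
    · rintro v z ⟨h1, h2⟩ ⟨hva, hvb⟩ hzn ⟨hza, hzb⟩
      exact ⟨hA3 v z h1 hva hzn hza, hB3 v z h2 hvb hzn hzb⟩
    · rintro v w x ⟨h1, h2⟩ hne ⟨hva, hvb⟩ ⟨hwa, hwb⟩ hxn ⟨hxa, hxb⟩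
      exact ⟨hA5 v w x h1 hne hva hwa hxn hxa, hB5 v w x h2 hne hvb hwb hxn hxb⟩
    · rintro v w x y ⟨h1, h2⟩ hne ⟨hva, hvb⟩ ⟨hwa, hwb⟩ hxn ⟨hxa, hxb⟩ hyn ⟨hya, hyb⟩ hxy
      exact ⟨hA6 v w x y h1 hne hva hwa hxn hxa hyn hya hxy,
        hB6 v w x y h2 hne hvb hwb hxn hxb hyn hyb hxy⟩
  | star α =>
    simp only [PExp.Positive] at hpos
    obtain ⟨hA1, hA2, hA3, hA5, hA6⟩ := keyP K Eset hK α hpos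
    simp only [psem, PExp.vals, Set.mem_union, Set.mem_setOf_eq, DataGraph.idRel]
    refine ⟨?_, ?_, ?_, ?_, ?_⟩
    · rintro v w z (⟨heq, -⟩ | htg) hne hw hzn hz
      · exact absurd heq hne
      · refine Or.inr ?_
        rcases tg_last htg with heq | ⟨b, hbw, hbwα, hrest⟩
        · exact absurd heq hne
        · have hbz : (b, z) ∈ psem K α := hA1 b w z hbwα hbw hw hzn hz
          rcases hrest with rfl | htg2
          · exact Relation.TransGen.single hbz
          · exact htg2.tail hbz
    · rintro v w z (⟨heq, -⟩ | htg) hne hv hzn hz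
      · exact absurd heq hne
      · refine Or.inr ?_
        rcases tg_first htg with heq | ⟨a, hav, hvaα, hrest⟩
        · exact absurd heq hne
        · have hza : (z, a) ∈ psem K α := hA2 v a z hvaα (fun hh => hav hh.symm) hv hzn hz
          rcases hrest with rfl | htg2
          · exact Relation.TransGen.single hza
          · exact Relation.TransGen.head hza htg2
    · rintro v z - - hzn -; exact Or.inl ⟨by trivial, hzn⟩
    · rintro v w x - - - - hxn -; exact Or.inl ⟨by trivial, hxn⟩
    · rintro v w x y (⟨heq, -⟩ | htg) hne hv hw hxn hx hyn hy hxy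
      · exact absurd heq hne
      · refine Or.inr ?_
        rcases tg_first htg with heq | ⟨a, hav, hva, hrest⟩
        · exact absurd heq hne
        have hxa : (x, a) ∈ psem K α := hA2 v a x hva (fun hh => hav hh.symm) hv hxn hx
        rcases hrest with rfl | htg2
        · exact Relation.TransGen.single
            (hA6 v a x y hva (fun hh => hav hh.symm) hv hw hxn hx hyn hy hxy)
        · rcases tg_last htg2 with rfl | ⟨b, hbw, hbw', hrest2⟩
          · exact Relation.TransGen.single
              (hA6 v a x y hva (fun hh => hav hh.symm) hv hw hxn hx hyn hy hxy)
          · have hby : (b, y) ∈ psem K α := hA1 b w y hbw' hbw hw hyn hy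
            rcases hrest2 with rfl | htg3
            · exact (Relation.TransGen.single hxa).tail hby
            · exact ((Relation.TransGen.single hxa).trans htg3).tail hby
  | compl α => exact absurd hpos (by simp [PExp.Positive])
  | iter α n m =>
    simp only [PExp.Positive] at hpos
    obtain ⟨hA1, hA2, hA3, hA5, hA6⟩ := keyP K Eset hK α hpos
    have hp : ∀ k : ℕ,
        (∀ v w z, (v, w) ∈ dgPow K.idRel (psem K α) k → v ≠ w → K.data w ∉ α.vals →
          z ∈ K.nodes → K.data z ∉ α.vals → (v, z) ∈ dgPow K.idRel (psem K α) k) ∧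
        (∀ v w z, (v, w) ∈ dgPow K.idRel (psem K α) k → v ≠ w → K.data v ∉ α.vals →
          z ∈ K.nodes → K.data z ∉ α.vals → (z, w) ∈ dgPow K.idRel (psem K α) k) ∧
        (∀ v z, (v, v) ∈ dgPow K.idRel (psem K α) k → K.data v ∉ α.vals →
          z ∈ K.nodes → K.data z ∉ α.vals → (z, z) ∈ dgPow K.idRel (psem K α) k) ∧
        (∀ v w x, (v, w) ∈ dgPow K.idRel (psem K α) k → v ≠ w → K.data v ∉ α.vals →
          K.data w ∉ α.vals → x ∈ K.nodes → K.data x ∉ α.vals →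
          (x, x) ∈ dgPow K.idRel (psem K α) k) ∧
        (∀ v w x y, (v, w) ∈ dgPow K.idRel (psem K α) k → v ≠ w → K.data v ∉ α.vals →
          K.data w ∉ α.vals → x ∈ K.nodes → K.data x ∉ α.vals → y ∈ K.nodes →
          K.data y ∉ α.vals → x ≠ y → (x, y) ∈ dgPow K.idRel (psem K α) k) := by
      intro k
      induction k with
      | zero =>
        simp only [dgPow, DataGraph.idRel, Set.mem_setOf_eq]
        refine ⟨?_, ?_, ?_, ?_, ?_⟩
        · rintro v w z ⟨heq, -⟩ hne _ _ _; exact absurd heq hne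
        · rintro v w z ⟨heq, -⟩ hne _ _ _; exact absurd heq hne
        · rintro v z - - hzn -; exact ⟨by trivial, hzn⟩
        · rintro v w x ⟨heq, -⟩ hne _ _ _ _; exact absurd heq hne
        · rintro v w x y ⟨heq, -⟩ hne _ _ _ _ _ _ _; exact absurd heq hne
      | succ k ih =>
        obtain ⟨ih1, ih2, ih3, ih5, ih6⟩ := ih
        simp only [dgPow, dgComp, Set.mem_setOf_eq]
        refine ⟨?_, ?_, ?_, ?_, ?_⟩
        · rintro v w z ⟨m, hvm, hmw⟩ hne hw hzn hz
          by_cases hmw' : m = w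
          · subst hmw'
            exact ⟨z, ih1 v m z hvm hne hw hzn hz, hA3 m z hmw hw hzn hz⟩
          · exact ⟨m, hvm, hA1 m w z hmw hmw' hw hzn hz⟩
        · rintro v w z ⟨m, hvm, hmw⟩ hne hv hzn hz
          by_cases hmv : m = v
          · subst hmv
            exact ⟨z, ih3 m z hvm hv hzn hz, hA2 m w z hmw hne hv hzn hz⟩
          · exact ⟨m, ih2 v m z hvm (fun hh => hmv hh.symm) hv hzn hz, hmw⟩
        · rintro v z ⟨m, hvm, hmv⟩ hv hzn hz
          by_cases hcv : m = v
          · subst hcv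
            exact ⟨z, ih3 m z hvm hv hzn hz, hA3 m z hmv hv hzn hz⟩
          · exact ⟨m, ih2 v m z hvm (fun hh => hcv hh.symm) hv hzn hz,
              hA1 m v z hmv hcv hv hzn hz⟩
        · rintro v w x ⟨m, hvm, hmw⟩ hne hv hw hxn hx
          by_cases hmv : m = v
          · subst hmv
            exact ⟨x, ih3 m x hvm hv hxn hx, hA5 m w x hmw hne hv hw hxn hx⟩
          by_cases hmw' : m = w
          · subst hmw'
            exact ⟨x, ih5 v m x hvm hne hv hw hxn hx, hA3 m x hmw hw hxn hx⟩
          · exact ⟨m, ih2 v m x hvm (fun hh => hmv hh.symm) hv hxn hx,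
              hA1 m w x hmw hmw' hw hxn hx⟩
        · rintro v w x y ⟨m, hvm, hmw⟩ hne hv hw hxn hx hyn hy hxy
          by_cases hmv : m = v
          · subst hmv
            exact ⟨x, ih3 m x hvm hv hxn hx, hA6 m w x y hmw hne hv hw hxn hx hyn hy hxy⟩
          by_cases hmw' : m = w
          · subst hmw'
            exact ⟨y, ih6 v m x y hvm hne hv hw hxn hx hyn hy hxy, hA3 m y hmw hw hyn hy⟩
          · exact ⟨m, ih2 v m x hvm (fun hh => hmv hh.symm) hv hxn hx,
              hA1 m w y hmw hmw' hw hyn hy⟩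
    simp only [psem, PExp.vals, Set.mem_setOf_eq]
    refine ⟨?_, ?_, ?_, ?_, ?_⟩
    · rintro v w z ⟨k, hkn, hkm, hmem⟩ hne hw hzn hz
      exact ⟨k, hkn, hkm, (hp k).1 v w z hmem hne hw hzn hz⟩
    · rintro v w z ⟨k, hkn, hkm, hmem⟩ hne hv hzn hz
      exact ⟨k, hkn, hkm, (hp k).2.1 v w z hmem hne hv hzn hz⟩
    · rintro v z ⟨k, hkn, hkm, hmem⟩ hv hzn hz
      exact ⟨k, hkn, hkm, (hp k).2.2.1 v z hmem hv hzn hz⟩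
    · rintro v w x ⟨k, hkn, hkm, hmem⟩ hne hv hw hxn hx
      exact ⟨k, hkn, hkm, (hp k).2.2.2.1 v w x hmem hne hv hw hxn hx⟩
    · rintro v w x y ⟨k, hkn, hkm, hmem⟩ hne hv hw hxn hx hyn hy hxy
      exact ⟨k, hkn, hkm, (hp k).2.2.2.2 v w x y hmem hne hv hw hxn hx hyn hy hxy⟩
termination_by sizeOf α

/-- Key node lemma: data-value transfer for positive node expressions on complete graphs. -/
private theorem keyN (K : DataGraph V E Dv) (Eset : Set E)
    (hK : ∀ v ∈ K.nodes, ∀ w ∈ K.nodes, K.edges v w = Eset)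
    (φ : NExp E Dv) (hpos : φ.Positive) :
    ∀ v z, v ∈ nsem K φ → v ∈ K.nodes → K.data v ∉ φ.vals → z ∈ K.nodes →
      K.data z ∉ φ.vals → z ∈ nsem K φ := by
  cases φ with
  | neg φ => exact absurd hpos (by simp [NExp.Positive])
  | and φ ψ =>
    simp only [NExp.Positive] at hpos
    simp only [nsem, NExp.vals, Set.mem_union, not_or, Set.mem_inter_iff]
    rintro v z ⟨h1, h2⟩ hvn ⟨hva, hvb⟩ hzn ⟨hza, hzb⟩
    exact ⟨keyN K Eset hK φ hpos.1 v z h1 hvn hva hzn hza,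
      keyN K Eset hK ψ hpos.2 v z h2 hvn hvb hzn hzb⟩
  | or φ ψ =>
    simp only [NExp.Positive] at hpos
    simp only [nsem, NExp.vals, Set.mem_union, not_or]
    rintro v z (h | h) hvn ⟨hva, hvb⟩ hzn ⟨hza, hzb⟩
    · exact Or.inl (keyN K Eset hK φ hpos.1 v z h hvn hva hzn hza)
    · exact Or.inr (keyN K Eset hK ψ hpos.2 v z h hvn hvb hzn hzb)
  | diam α =>
    simp only [NExp.Positive] at hpos
    obtain ⟨hA1, hA2, hA3, hA5, hA6⟩ := keyP K Eset hK α hpos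
    simp only [nsem, NExp.vals, Set.mem_setOf_eq]
    rintro v z ⟨w, hw⟩ hvn hv hzn hz
    by_cases hwv : w = v
    · subst hwv
      exact ⟨z, hA3 w z hw hv hzn hz⟩
    · exact ⟨w, hA2 v w z hw (fun hh => hwv hh.symm) hv hzn hz⟩
  | eqc c =>
    simp only [NExp.vals, Set.mem_singleton_iff, nsem, Set.mem_setOf_eq]
    rintro v z ⟨-, hd⟩ - hv - -
    exact absurd hd hv
  | neqc c =>
    simp only [NExp.vals, Set.mem_singleton_iff, nsem, Set.mem_setOf_eq]
    rintro v z - - - hzn hz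
    exact ⟨hzn, hz⟩
  | cmpEq α β =>
    simp only [NExp.Positive] at hpos
    obtain ⟨hA1, hA2, hA3, hA5, hA6⟩ := keyP K Eset hK α hpos.1
    obtain ⟨hB1, hB2, hB3, hB5, hB6⟩ := keyP K Eset hK β hpos.2
    simp only [nsem, NExp.vals, Set.mem_union, not_or, Set.mem_setOf_eq]
    rintro v z ⟨v', v'', ha, hb, heq⟩ hvn ⟨hva, hvb⟩ hzn ⟨hza, hzb⟩
    by_cases h1 : v' = v
    · rw [h1] at ha heq
      by_cases h2 : v'' = v
      · rw [h2] at hb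
        exact ⟨z, z, hA3 v z ha hva hzn hza, hB3 v z hb hvb hzn hzb, rfl⟩
      · have hv''b : K.data v'' ∉ β.vals := by rw [← heq]; exact hvb
        exact ⟨z, z, hA3 v z ha hva hzn hza,
          hB5 v v'' z hb (fun hh => h2 hh.symm) hvb hv''b hzn hzb, rfl⟩
    · by_cases h2 : v'' = v
      · rw [h2] at hb heq
        have hv'a : K.data v' ∉ α.vals := by rw [heq]; exact hva
        exact ⟨z, z, hA5 v v' z ha (fun hh => h1 hh.symm) hva hv'a hzn hza,
          hB3 v z hb hvb hzn hzb, rfl⟩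
      · exact ⟨v', v'', hA2 v v' z ha (fun hh => h1 hh.symm) hva hzn hza,
          hB2 v v'' z hb (fun hh => h2 hh.symm) hvb hzn hzb, heq⟩
  | cmpNeq α β =>
    simp only [NExp.Positive] at hpos
    obtain ⟨hA1, hA2, hA3, hA5, hA6⟩ := keyP K Eset hK α hpos.1
    obtain ⟨hB1, hB2, hB3, hB5, hB6⟩ := keyP K Eset hK β hpos.2
    simp only [nsem, NExp.vals, Set.mem_union, not_or, Set.mem_setOf_eq]
    rintro v z ⟨v', v'', ha, hb, hne⟩ hvn ⟨hva, hvb⟩ hzn ⟨hza, hzb⟩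
    by_cases h1 : v' = v
    · rw [h1] at ha hne
      by_cases h2 : v'' = v
      · rw [h2] at hne; exact absurd rfl hne
      · by_cases hdz : K.data z = K.data v''
        · have hv''b : K.data v'' ∉ β.vals := by rw [← hdz]; exact hzb
          have hzv : z ≠ v := fun hh => hne (by rw [← hh]; exact hdz)
          refine ⟨z, v, hA3 v z ha hva hzn hza, ?_, ?_⟩
          · exact hB6 v v'' z v hb (fun hh => h2 hh.symm) hvb hv''b hzn hzb hvn hvb hzv
          · rw [hdz]; exact fun hh => hne hh.symm
        · exact ⟨z, v'', hA3 v z ha hva hzn hza,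
            hB2 v v'' z hb (fun hh => h2 hh.symm) hvb hzn hzb, hdz⟩
    · by_cases h2 : v'' = v
      · rw [h2] at hb hne
        by_cases hdz : K.data z = K.data v'
        · have hv'a : K.data v' ∉ α.vals := by rw [← hdz]; exact hza
          have hzv : z ≠ v := fun hh => hne (by rw [hh] at hdz; exact hdz.symm)
          refine ⟨v, z, ?_, hB3 v z hb hvb hzn hzb, ?_⟩
          · exact hA6 v v' z v ha (fun hh => h1 hh.symm) hva hv'a hzn hza hvn hva hzv
          · rw [hdz]; exact fun hh => hne hh.symm
        · exact ⟨v', z, hA2 v v' z ha (fun hh => h1 hh.symm) hva hzn hza,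
            hB3 v z hb hvb hzn hzb, fun hh => hdz hh.symm⟩
      · exact ⟨v', v'', hA2 v v' z ha (fun hh => h1 hh.symm) hva hzn hza,
          hB2 v v'' z hb (fun hh => h2 hh.symm) hvb hzn hzb, hne⟩
termination_by sizeOf φ
end

end Key
/-- data-value transfer in uniformly complete graphs (node expressions). -/
theorem stmt7 {V E Dv : Type} (K : DataGraph V E Dv) (Eset : Set E)
    (hK : ∀ v ∈ K.nodes, ∀ w ∈ K.nodes, K.edges v w = Eset)
    (φ : NExp E Dv) (hφ : φ.Positive)
    (v : V) (hv : v ∈ K.nodes) (hvd : K.data v ∉ φ.vals) (hsat : v ∈ nsem K φ) :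
    ∀ z ∈ K.nodes, K.data z ∉ φ.vals → z ∈ nsem K φ := by
  intro z hzn hzd
  exact keyN K Eset hK φ hφ v z hsat hv hvd hzn hzd
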